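/- arXiv:1206.5046 — 2 statements merged into one kernel-verified Lean document; each statement's English description precedes it below -/
import Mathlib

section
/- For generalized Laguerre polynomials with parameter α > -1 and n ≥ 1, the diagonal integral a_{n,n}^{(α)}(x) := ∫₀ˣ (L_n^{(α)}(y))² e^{-y} y^α dy satisfies the recursion a_{n,n}^{(α)}(x) = (1/n)[ L_n^{(α)}(x) L_{n-1}^{(α+1)}(x) e^{-x} x^{α+1} + a_{n-1,n-1}^{(α+1)}(x) ], with a_{0,0}^{(α)}(x) = γ(α+1, x), the lower incomplete gamma function. -/
open MeasureTheory intervalIntegral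

noncomputable def laguerre (α : ℝ) (n : ℕ) (x : ℝ) : ℝ :=
  ∑ k ∈ Finset.range (n + 1),
    (-1 : ℝ) ^ k * Real.Gamma (α + n + 1) /
      (Real.Gamma (α + k + 1) * (Nat.factorial (n - k)) * (Nat.factorial k)) * x ^ k

/-- The truncated diagonal weighted inner product of Laguerre polynomials:
`a_{n,n}^{(α)}(x) = ∫₀ˣ (L_n^{(α)}(y))² e^{-y} y^α dy`. -/
noncomputable def laguerreDiag (α : ℝ) (n : ℕ) (x : ℝ) : ℝ :=
  ∫ y in (0 : ℝ)..x, (laguerre α n y) ^ 2 * Real.exp (-y) * y ^ α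

/-- The lower incomplete gamma function `γ(a, x) = ∫₀ˣ e^{-y} y^{a-1} dy`. -/
noncomputable def lowerGamma (a x : ℝ) : ℝ :=
  ∫ y in (0 : ℝ)..x, Real.exp (-y) * y ^ (a - 1)

/-!
Put `w_β(y) = e^{-y} y^β`. The Laguerre polynomials satisfy `(L_{m+1}^{(α)})' = -L_m^{(α+1)}` and the
Rodrigues-type step `(w_{α+1} L_m^{(α+1)})' = (m+1) w_α L_{m+1}^{(α)}`, both checked on coefficients.
By the product rule,
`(L_{m+1}^{(α)} · w_{α+1} L_m^{(α+1)})' = (m+1) (L_{m+1}^{(α)})² w_α - (L_m^{(α+1)})² w_{α+1}`,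
and integrating over `[0, x]` (the boundary term at `0` vanishes because `α + 1 > 0`) gives
`(m+1) a_{m+1,m+1}^{(α)}(x) - a_{m,m}^{(α+1)}(x) = L_{m+1}^{(α)}(x) L_m^{(α+1)}(x) w_{α+1}(x)`.
-/

open Finset

noncomputable def laguerreCoeff (α : ℝ) (n k : ℕ) : ℝ :=
  (-1 : ℝ) ^ k * Real.Gamma (α + n + 1) /
    (Real.Gamma (α + k + 1) * (Nat.factorial (n - k)) * (Nat.factorial k))

lemma laguerre_eq_sum (α : ℝ) (n : ℕ) (x : ℝ) :
    laguerre α n x = ∑ k ∈ range (n + 1), laguerreCoeff α n k * x ^ k := rfl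

lemma continuous_laguerre (α : ℝ) (n : ℕ) : Continuous (laguerre α n) :=
  continuous_finsetSum _ fun k _ => continuous_const.mul (continuous_pow k)

lemma laguerreCoeff_succ_mul (α : ℝ) (n i : ℕ) :
    laguerreCoeff α (n + 1) (i + 1) * ((i : ℝ) + 1) = -laguerreCoeff (α + 1) n i := by
  simp only [laguerreCoeff, Nat.succ_sub_succ, Nat.factorial_succ]
  push_cast
  rw [show α + ((n : ℝ) + 1) + 1 = α + 1 + n + 1 by ring,
    show α + ((i : ℝ) + 1) + 1 = α + 1 + i + 1 by ring]
  field_simp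
  ring

lemma hasDerivAt_laguerre_succ (α : ℝ) (n : ℕ) (x : ℝ) :
    HasDerivAt (laguerre α (n + 1)) (-laguerre (α + 1) n x) x := by
  have h := HasDerivAt.fun_sum (u := range (n + 1 + 1)) fun k _ =>
    (hasDerivAt_pow k x).const_mul (laguerreCoeff α (n + 1) k)
  refine h.congr_deriv ?_
  rw [sum_range_succ', laguerre_eq_sum, ← sum_neg_distrib]
  simp only [Nat.cast_zero, zero_mul, mul_zero, add_zero, Nat.add_sub_cancel]
  refine sum_congr rfl fun i _ => ?_
  push_cast
  linear_combination x ^ i * laguerreCoeff_succ_mul α n i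

lemma hasDerivAt_exp_neg_mul_rpow_mul_pow (p : ℝ) (k : ℕ) {y : ℝ} (hy : 0 < y) :
    HasDerivAt (fun z => Real.exp (-z) * z ^ p * z ^ k)
      (Real.exp (-y) * y ^ (p - 1) * ((p + k) * y ^ k - y ^ (k + 1))) y := by
  have hexp : HasDerivAt (fun z => Real.exp (-z)) (-Real.exp (-y)) y := by
    simpa using (hasDerivAt_neg y).exp
  have h := hexp.mul (Real.hasDerivAt_rpow_const (p := p + k) (Or.inl hy.ne'))
  have hfun : (fun z => Real.exp (-z) * z ^ (p + k)) =ᶠ[nhds y]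
      fun z => Real.exp (-z) * z ^ p * z ^ k := by
    filter_upwards [Ioi_mem_nhds hy] with z hz
    rw [Real.rpow_add hz, Real.rpow_natCast, mul_assoc]
  refine (h.congr_of_eventuallyEq hfun.symm).congr_deriv ?_
  rw [show p + k = (p - 1) + (k + 1 : ℕ) by push_cast; ring, Real.rpow_add hy,
    show (p - 1) + (k + 1 : ℕ) - 1 = (p - 1) + k by push_cast; ring, Real.rpow_add hy,
    Real.rpow_natCast, Real.rpow_natCast]
  push_cast
  ring

section

variable {α : ℝ}

lemma Gamma_add_natCast_add_one_ne_zero (hα : -1 < α) (k : ℕ) : Real.Gamma (α + k + 1) ≠ 0 :=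
  (Real.Gamma_pos_of_pos (by linarith [(Nat.cast_nonneg k : (0 : ℝ) ≤ k)])).ne'

lemma laguerre_zero (hα : -1 < α) (y : ℝ) : laguerre α 0 y = 1 := by
  simpa [laguerre_eq_sum, laguerreCoeff] using div_self (Gamma_add_natCast_add_one_ne_zero hα 0)

lemma laguerreCoeff_rodrigues_zero (hα : -1 < α) (m : ℕ) :
    (α + 1) * laguerreCoeff (α + 1) m 0 = ((m : ℝ) + 1) * laguerreCoeff α (m + 1) 0 := by
  have hα' : α + 1 ≠ 0 := by linarith
  simp only [laguerreCoeff, Nat.sub_zero, Nat.factorial_zero, Nat.factorial_succ]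
  push_cast
  rw [show α + 1 + 0 + 1 = (α + 1) + 1 by ring, Real.Gamma_add_one hα',
    show α + ((m : ℝ) + 1) + 1 = α + 1 + m + 1 by ring, add_zero]
  have := Gamma_add_natCast_add_one_ne_zero hα 0
  rw [Nat.cast_zero, add_zero] at this
  field_simp

lemma laguerreCoeff_rodrigues_succ (hα : -1 < α) {m i : ℕ} (hi : i < m) :
    (α + 1 + ((i + 1 : ℕ) : ℝ)) * laguerreCoeff (α + 1) m (i + 1) - laguerreCoeff (α + 1) m i =
      ((m : ℝ) + 1) * laguerreCoeff α (m + 1) (i + 1) := by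
  obtain ⟨j, rfl⟩ : ∃ j, m = i + j + 1 := ⟨m - i - 1, by omega⟩
  have hΓ := Gamma_add_natCast_add_one_ne_zero hα (i + 1)
  have hs : α + (i + 1 : ℕ) + 1 ≠ 0 := by push_cast; linarith [(Nat.cast_nonneg i : (0 : ℝ) ≤ i)]
  simp only [laguerreCoeff, show i + j + 1 - (i + 1) = j by omega,
    show i + j + 1 - i = j + 1 by omega, show i + j + 1 + 1 - (i + 1) = j + 1 by omega,
    Nat.factorial_succ]
  rw [show α + 1 + ((i + 1 : ℕ) : ℝ) + 1 = (α + (i + 1 : ℕ) + 1) + 1 by push_cast; ring,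
    Real.Gamma_add_one hs, show α + 1 + (i : ℝ) + 1 = α + (i + 1 : ℕ) + 1 by push_cast; ring,
    show α + ((i + j + 1 + 1 : ℕ) : ℝ) + 1 = α + 1 + ((i + j + 1 : ℕ) : ℝ) + 1 by push_cast; ring]
  push_cast at hs hΓ ⊢
  field_simp
  ring

lemma laguerreCoeff_rodrigues_self (hα : -1 < α) (m : ℕ) :
    -laguerreCoeff (α + 1) m m = ((m : ℝ) + 1) * laguerreCoeff α (m + 1) (m + 1) := by
  have hΓ := Gamma_add_natCast_add_one_ne_zero hα (m + 1)
  simp only [laguerreCoeff, Nat.sub_self, Nat.factorial_zero, Nat.factorial_succ]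
  push_cast at hΓ ⊢
  rw [show α + 1 + (m : ℝ) + 1 = α + ((m : ℝ) + 1) + 1 by ring]
  field_simp
  ring

lemma sum_laguerreCoeff_rodrigues (hα : -1 < α) (m : ℕ) (y : ℝ) :
    ∑ k ∈ range (m + 1), laguerreCoeff (α + 1) m k * ((α + 1 + k) * y ^ k - y ^ (k + 1)) =
      ((m : ℝ) + 1) * laguerre α (m + 1) y := by
  set c := laguerreCoeff (α + 1) m
  set c' := laguerreCoeff α (m + 1)
  have hmid : ∑ i ∈ range m, ((α + 1 + ((i + 1 : ℕ) : ℝ)) * c (i + 1) * y ^ (i + 1) -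
      c i * y ^ (i + 1)) = ∑ i ∈ range m, ((m : ℝ) + 1) * (c' (i + 1) * y ^ (i + 1)) :=
    sum_congr rfl fun i hi => by
      linear_combination y ^ (i + 1) * laguerreCoeff_rodrigues_succ hα (mem_range.1 hi)
  calc ∑ k ∈ range (m + 1), c k * ((α + 1 + k) * y ^ k - y ^ (k + 1))
      = ∑ k ∈ range (m + 1), (α + 1 + k) * c k * y ^ k -
          ∑ k ∈ range (m + 1), c k * y ^ (k + 1) := by
        rw [← sum_sub_distrib]
        exact sum_congr rfl fun k _ => by ring
    _ = ((m : ℝ) + 1) * laguerre α (m + 1) y := by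
        rw [sum_range_succ', sum_range_succ (fun k => c k * y ^ (k + 1)), laguerre_eq_sum,
          sum_range_succ', sum_range_succ, mul_add, mul_add, mul_sum, ← hmid, sum_sub_distrib]
        linear_combination laguerreCoeff_rodrigues_zero hα m +
          y ^ (m + 1) * laguerreCoeff_rodrigues_self hα m

lemma hasDerivAt_exp_neg_mul_rpow_mul_laguerre (hα : -1 < α) (m : ℕ) {y : ℝ}
    (hy : 0 < y) :
    HasDerivAt (fun z => Real.exp (-z) * z ^ (α + 1) * laguerre (α + 1) m z)
      (Real.exp (-y) * y ^ α * (((m : ℝ) + 1) * laguerre α (m + 1) y)) y := by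
  have h := HasDerivAt.fun_sum (u := range (m + 1)) fun k _ =>
    (hasDerivAt_exp_neg_mul_rpow_mul_pow (α + 1) k hy).const_mul (laguerreCoeff (α + 1) m k)
  have hfun : (fun z => Real.exp (-z) * z ^ (α + 1) * laguerre (α + 1) m z) =
      fun z => ∑ k ∈ range (m + 1),
        laguerreCoeff (α + 1) m k * (Real.exp (-z) * z ^ (α + 1) * z ^ k) := by
    funext z
    rw [laguerre_eq_sum, mul_sum]
    exact sum_congr rfl fun k _ => by ring
  rw [hfun]
  refine h.congr_deriv ?_
  rw [← sum_laguerreCoeff_rodrigues hα, mul_sum, add_sub_cancel_right]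
  exact sum_congr rfl fun k _ => by ring

lemma hasDerivAt_laguerre_mul_exp_neg_mul_rpow_mul_laguerre (hα : -1 < α) (m : ℕ)
    {y : ℝ} (hy : 0 < y) :
    HasDerivAt
      (fun z => laguerre α (m + 1) z * (Real.exp (-z) * z ^ (α + 1) * laguerre (α + 1) m z))
      (((m : ℝ) + 1) * (laguerre α (m + 1) y ^ 2 * Real.exp (-y) * y ^ α) -
        laguerre (α + 1) m y ^ 2 * Real.exp (-y) * y ^ (α + 1)) y := by
  refine ((hasDerivAt_laguerre_succ α m y).mul
    (hasDerivAt_exp_neg_mul_rpow_mul_laguerre hα m hy)).congr_deriv ?_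
  rw [Real.rpow_add_one hy.ne']
  ring

lemma intervalIntegrable_laguerre_sq_mul_exp_neg_mul_rpow (hα : -1 < α) (n : ℕ)
    (a b : ℝ) :
    IntervalIntegrable (fun y => laguerre α n y ^ 2 * Real.exp (-y) * y ^ α) volume a b :=
  (intervalIntegrable_rpow' hα).continuousOn_mul
    (((continuous_laguerre α n).pow 2).mul (Real.continuous_exp.comp continuous_neg)).continuousOn

lemma succ_mul_laguerreDiag_sub_laguerreDiag (hα : -1 < α) (m : ℕ) {x : ℝ}
    (hx : 0 ≤ x) :
    ((m : ℝ) + 1) * laguerreDiag α (m + 1) x - laguerreDiag (α + 1) m x =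
      laguerre α (m + 1) x * (Real.exp (-x) * x ^ (α + 1) * laguerre (α + 1) m x) := by
  set F := fun z => laguerre α (m + 1) z * (Real.exp (-z) * z ^ (α + 1) * laguerre (α + 1) m z)
  have hα' : -1 < α + 1 := by linarith
  have hint := intervalIntegrable_laguerre_sq_mul_exp_neg_mul_rpow hα (m + 1) 0 x
  have hint' := intervalIntegrable_laguerre_sq_mul_exp_neg_mul_rpow hα' m 0 x
  have hF : Continuous F := (continuous_laguerre α (m + 1)).mul
    (((Real.continuous_exp.comp continuous_neg).mul (Real.continuous_rpow_const (by linarith))).mul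
      (continuous_laguerre (α + 1) m))
  have hF0 : F 0 = 0 := by simp [F, Real.zero_rpow (by linarith : α + 1 ≠ 0)]
  calc ((m : ℝ) + 1) * laguerreDiag α (m + 1) x - laguerreDiag (α + 1) m x
      = ∫ y in (0 : ℝ)..x, (((m : ℝ) + 1) * (laguerre α (m + 1) y ^ 2 * Real.exp (-y) * y ^ α) -
          laguerre (α + 1) m y ^ 2 * Real.exp (-y) * y ^ (α + 1)) := by
        rw [intervalIntegral.integral_sub (hint.const_mul _) hint',
          intervalIntegral.integral_const_mul]
        rfl
    _ = F x - F 0 := integral_eq_sub_of_hasDeriv_right_of_le hx hF.continuousOn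
        (fun y hy => (hasDerivAt_laguerre_mul_exp_neg_mul_rpow_mul_laguerre hα m
          hy.1).hasDerivWithinAt) ((hint.const_mul _).sub hint')
    _ = F x := by rw [hF0, sub_zero]

end

theorem laguerreDiag_recursion (α : ℝ) (hα : -1 < α) (x : ℝ) (hx : 0 < x) :
    laguerreDiag α 0 x = lowerGamma (α + 1) x ∧
      ∀ n : ℕ, 1 ≤ n →
        laguerreDiag α n x =
          (1 / (n : ℝ)) *
            (laguerre α n x * laguerre (α + 1) (n - 1) x * Real.exp (-x) * x ^ (α + 1) +
              laguerreDiag (α + 1) (n - 1) x) := by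
  refine ⟨integral_congr fun y _ => ?_, fun n hn => ?_⟩
  · simp only [laguerre_zero hα, add_sub_cancel_right, one_pow, one_mul]
  · obtain ⟨m, rfl⟩ : ∃ m, n = m + 1 := ⟨n - 1, by omega⟩
    have key := succ_mul_laguerreDiag_sub_laguerreDiag hα m hx.le
    rw [Nat.add_sub_cancel]
    push_cast
    field_simp
    linear_combination key
end

section
/- For every real y and nonnegative integer n, ∫_{-∞}^∞ e^{-(x+y)²} H_n(x) dx = √π · (−2y)^n. -/
open MeasureTheory

/-- Physicists' Hermite polynomials. -/
noncomputable def hermite : ℕ → ℝ → ℝ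
  | 0, _ => 1
  | 1, x => 2 * x
  | n + 2, x => 2 * x * hermite (n + 1) x - 2 * ((n : ℝ) + 1) * hermite n x

/-!
Writing `I n = ∫ e^{-(x+y)²} H_n(x) dx`, the lowering identity `H_n' = 2x H_n - H_{n+1}` gives
`(e^{-(x+y)²} H_n)' = -e^{-(x+y)²} (H_{n+1} + 2y H_n)`. The left side integrates to zero over `ℝ`,
so `I (n+1) = -2y I n`, while `I 0 = √π` is the Gaussian integral.
-/

open Real
open scoped Polynomial

theorem hasDerivAt_hermite : ∀ (n : ℕ) (x : ℝ),
    HasDerivAt (hermite n) (2 * x * hermite n x - hermite (n + 1) x) x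
  | 0, x => by simpa [hermite] using hasDerivAt_const x (1 : ℝ)
  | 1, x => by
      refine ((hasDerivAt_id x).const_mul (2 : ℝ)).congr_deriv ?_
      simp only [hermite]
      ring
  | n + 2, x => by
      refine ((((hasDerivAt_id x).const_mul (2 : ℝ)).mul (hasDerivAt_hermite (n + 1) x)).sub
        ((hasDerivAt_hermite n x).const_mul (2 * ((n : ℝ) + 1)))).congr_deriv ?_
      simp only [hermite, id]
      push_cast
      ring

theorem exists_polynomial_eval_eq_hermite : ∀ n : ℕ, ∃ p : ℝ[X], ∀ x, p.eval x = hermite n x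
  | 0 => ⟨1, by simp [hermite]⟩
  | 1 => ⟨Polynomial.C 2 * Polynomial.X, by simp [hermite]⟩
  | n + 2 => by
      obtain ⟨p, hp⟩ := exists_polynomial_eval_eq_hermite n
      obtain ⟨q, hq⟩ := exists_polynomial_eval_eq_hermite (n + 1)
      exact ⟨Polynomial.C 2 * Polynomial.X * q - Polynomial.C (2 * ((n : ℝ) + 1)) * p,
        by simp [hermite, hp, hq]⟩

theorem integrable_exp_neg_sq_mul_eval (p : ℝ[X]) :
    Integrable fun x : ℝ => exp (-x ^ 2) * p.eval x := by
  induction p using Polynomial.induction_on' with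
  | add p q hp hq => simpa [mul_add] using hp.fun_add hq
  | monomial n a =>
      have hpow : Integrable fun x : ℝ => x ^ n * exp (-x ^ 2) := by
        simpa [rpow_natCast] using integrable_rpow_mul_exp_neg_mul_sq (b := 1) one_pos
          (s := n) (by linarith [n.cast_nonneg (α := ℝ)])
      refine (hpow.const_mul a).congr (.of_forall fun x => ?_)
      simp only [Polynomial.eval_monomial]
      ring

theorem integrable_exp_neg_add_sq_mul_eval (y : ℝ) (p : ℝ[X]) :
    Integrable fun x : ℝ => exp (-(x + y) ^ 2) * p.eval x := by
  have h := integrable_exp_neg_sq_mul_eval (p.comp (Polynomial.X - Polynomial.C y))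
  simpa [Function.comp_def, Polynomial.eval_comp] using h.comp_add_right y

theorem integrable_exp_neg_add_sq_mul_hermite (y : ℝ) (n : ℕ) :
    Integrable fun x : ℝ => exp (-(x + y) ^ 2) * hermite n x := by
  obtain ⟨p, hp⟩ := exists_polynomial_eval_eq_hermite n
  simpa [hp] using integrable_exp_neg_add_sq_mul_eval y p

theorem hasDerivAt_exp_neg_add_sq_mul_hermite (y : ℝ) (n : ℕ) (x : ℝ) :
    HasDerivAt (fun t => exp (-(t + y) ^ 2) * hermite n t)
      (-(exp (-(x + y) ^ 2) * hermite (n + 1) x) - 2 * y * (exp (-(x + y) ^ 2) * hermite n x))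
      x := by
  have hexp : HasDerivAt (fun t : ℝ => exp (-(t + y) ^ 2))
      (exp (-(x + y) ^ 2) * -(2 * (x + y))) x := by
    simpa using ((((hasDerivAt_id x).add_const y).pow 2).neg).exp
  refine (hexp.fun_mul (hasDerivAt_hermite n x)).congr_deriv ?_
  ring

theorem integral_exp_neg_add_sq_mul_hermite_succ (y : ℝ) (n : ℕ) :
    (∫ x : ℝ, exp (-(x + y) ^ 2) * hermite (n + 1) x) =
      -2 * y * ∫ x : ℝ, exp (-(x + y) ^ 2) * hermite n x := by
  have hsucc := integrable_exp_neg_add_sq_mul_hermite y (n + 1)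
  have hn := integrable_exp_neg_add_sq_mul_hermite y n
  have hzero := integral_eq_zero_of_hasDerivAt_of_integrable
    (hasDerivAt_exp_neg_add_sq_mul_hermite y n) (hsucc.fun_neg.sub (hn.const_mul (2 * y))) hn
  rw [integral_sub hsucc.fun_neg (hn.const_mul _), integral_neg, integral_const_mul] at hzero
  linarith

theorem integral_exp_neg_add_sq (y : ℝ) : ∫ x : ℝ, exp (-(x + y) ^ 2) = √π := by
  simpa using (integral_add_right_eq_self (fun x : ℝ => exp (-1 * x ^ 2)) y).trans
    (integral_gaussian 1)

theorem hermite_shifted_gaussian_integral (y : ℝ) (n : ℕ) :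
    (∫ x : ℝ, Real.exp (-(x + y) ^ 2) * hermite n x) =
      Real.sqrt Real.pi * (-2 * y) ^ n := by
  induction n with
  | zero => simpa [hermite] using integral_exp_neg_add_sq y
  | succ n ih => rw [integral_exp_neg_add_sq_mul_hermite_succ, ih, pow_succ]; ring
end
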